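/- For real x with |x| < 1: ∑_{n=1}^∞ (1/n²)·(∑_{k=1}^n x^k/k) = 2 ∑_{n=1}^∞ (H_n/n²) xⁿ + ln(1−x)·Li₂(x) − 2 Li₃(x) − ζ(2)·ln(1−x). -/

import Mathlib

open Real Filter

/-- Generalized harmonic number `H_n^(m) = ∑_{j=1}^n 1/j^m`. -/
noncomputable def H (m n : ℕ) : ℝ := ∑ j ∈ Finset.range n, 1 / ((j : ℝ) + 1) ^ m

/-- Riemann zeta value `ζ(r) = ∑_{n=1}^∞ 1/n^r`. -/
noncomputable def zt (r : ℕ) : ℝ := ∑' n : ℕ, 1 / ((n : ℝ) + 1) ^ r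

/-- Polylogarithm `Li_p(x)`, with `Li_1(x) = -log(1-x)`. -/
noncomputable def Li (p : ℕ) (x : ℝ) : ℝ :=
  if p = 1 then -Real.log (1 - x) else ∑' n : ℕ, x ^ (n + 1) / ((n : ℝ) + 1) ^ p

/-!
Write `w k = x^(k+1)/(k+1)`. Exchanging the order of summation turns the left-hand side into
`∑ₖ w k (ζ(2) - H⁽²⁾ₖ) = -ζ(2) log(1-x) - ∑ₖ w k H⁽²⁾ₖ`. The last series is read off from the
Cauchy product `Li₁(x) Li₂(x)`: by the partial fractions
`1/(a b²) = 1/((a+b) b²) + 1/((a+b)² a) + 1/((a+b)² b)`, the coefficient of `x^(m+2)` in that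
product is `H⁽²⁾ₘ₊₁/(m+2) + 2 H⁽¹⁾ₘ₊₁/(m+2)²`.
-/

theorem H_nonneg (m n : ℕ) : 0 ≤ H m n :=
  Finset.sum_nonneg fun _ _ => by positivity

theorem H_le (m n : ℕ) : H m n ≤ n := by
  calc H m n ≤ ∑ _j ∈ Finset.range n, (1 : ℝ) :=
        Finset.sum_le_sum fun j _ =>
          div_le_one_of_le₀ (one_le_pow₀ (by linarith [j.cast_nonneg' (α := ℝ)])) (by positivity)
    _ = n := by simp

theorem H_succ (m n : ℕ) : H m (n + 1) = H m n + 1 / ((n : ℝ) + 1) ^ m :=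
  Finset.sum_range_succ _ _

theorem summable_one_div_nat_add_one_pow {m : ℕ} (hm : 1 < m) :
    Summable fun n : ℕ => 1 / ((n : ℝ) + 1) ^ m := by
  simpa using (summable_nat_add_iff 1).mpr (Real.summable_one_div_nat_pow.mpr hm)

theorem zt_sub_H {m : ℕ} (hm : 1 < m) (k : ℕ) :
    zt m - H m k = ∑' n : ℕ, 1 / (((n + k : ℕ) : ℝ) + 1) ^ m := by
  rw [zt, ← (summable_one_div_nat_add_one_pow hm).sum_add_tsum_nat_add k, H]
  ring

theorem Li_one (x : ℝ) : Li 1 x = -Real.log (1 - x) := if_pos rfl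

theorem summable_of_abs_le_abs_pow_succ {x : ℝ} (hx : |x| < 1) {f : ℕ → ℝ}
    (hf : ∀ n, |f n| ≤ |x| ^ (n + 1)) : Summable f :=
  .of_norm_bounded ((summable_geometric_of_lt_one (abs_nonneg x) hx).mul_left |x|)
    fun n => by simpa [pow_succ'] using hf n

theorem hasSum_Li {x : ℝ} (hx : |x| < 1) (p : ℕ) :
    HasSum (fun n : ℕ => x ^ (n + 1) / ((n : ℝ) + 1) ^ p) (Li p x) := by
  rcases eq_or_ne p 1 with rfl | hp
  · simpa [Li_one] using Real.hasSum_pow_div_log_of_abs_lt_one hx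
  rw [Li, if_neg hp]
  refine (summable_of_abs_le_abs_pow_succ hx fun n => ?_).hasSum
  rw [abs_div, abs_pow, abs_pow, abs_of_pos (a := (n : ℝ) + 1) (by positivity)]
  exact div_le_self (by positivity) (one_le_pow₀ (by linarith [n.cast_nonneg' (α := ℝ)]))

theorem tsum_mul_sum_range_eq_tsum_mul_tsum_add {a b : ℕ → ℝ} (ha : Summable a)
    (hb : Summable b) :
    ∑' n, a n * ∑ k ∈ Finset.range (n + 1), b k = ∑' k, b k * ∑' n, a (n + k) := by
  obtain ⟨g, hg⟩ : ∃ g : ℕ → ℕ → ℝ, ∀ n k, g n k = if k ≤ n then a n * b k else 0 :=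
    ⟨_, fun _ _ => rfl⟩
  have hgs : Summable (Function.uncurry g) := by
    have hab : Summable fun p : ℕ × ℕ => a p.1 * b p.2 :=
      summable_mul_of_summable_norm ha.norm hb.norm
    have hind : Function.uncurry g = {p | p.2 ≤ p.1}.indicator fun p => a p.1 * b p.2 := by
      ext ⟨n, k⟩
      simp [hg, Set.indicator_apply]
    exact hind ▸ hab.indicator _
  have hrow (n : ℕ) : ∑' k, g n k = a n * ∑ k ∈ Finset.range (n + 1), b k := by
    rw [tsum_eq_sum (s := Finset.range (n + 1)), Finset.mul_sum]
    · exact Finset.sum_congr rfl fun k hk => by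
        rw [hg, if_pos (by simpa [Nat.lt_succ_iff] using hk)]
    · intro k hk
      rw [hg, if_neg (by simpa [Nat.lt_succ_iff] using hk)]
  have hcol (k : ℕ) : ∑' n, g n k = b k * ∑' n, a (n + k) := by
    have hsk : Summable fun n => g n k := (hgs.comp_injective Prod.swap_injective).prod_factor k
    rw [← hsk.sum_add_tsum_nat_add k, Finset.sum_eq_zero fun n hn => by
      rw [hg, if_neg (by simpa using hn)], zero_add, ← tsum_mul_left]
    exact tsum_congr fun n => by rw [hg, if_pos (Nat.le_add_left k n), mul_comm]
  simp only [← hrow, ← hcol]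
  exact hgs.tsum_comm.symm

open Finset.HasAntidiagonal

theorem one_div_mul_sq_eq {a b : ℝ} (ha : a ≠ 0) (hb : b ≠ 0) (hab : a + b ≠ 0) :
    1 / (a * b ^ 2) = 1 / (a + b) * (1 / b ^ 2) + 1 / (a + b) ^ 2 * (1 / a)
      + 1 / (a + b) ^ 2 * (1 / b) := by
  field_simp
  ring

theorem sum_antidiagonal_one_div_mul_sq (m : ℕ) :
    ∑ ij ∈ antidiagonal m, 1 / (((ij.1 : ℝ) + 1) * ((ij.2 : ℝ) + 1) ^ 2)
      = H 2 (m + 1) / ((m : ℝ) + 2) + 2 * H 1 (m + 1) / ((m : ℝ) + 2) ^ 2 := by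
  have hfst (f : ℕ → ℝ) : ∑ ij ∈ antidiagonal m, f ij.1 = ∑ k ∈ Finset.range (m + 1), f k :=
    Finset.Nat.sum_antidiagonal_eq_sum_range_succ (fun i _ => f i) m
  have hsnd (f : ℕ → ℝ) : ∑ ij ∈ antidiagonal m, f ij.2 = ∑ k ∈ Finset.range (m + 1), f k :=
    (Finset.Nat.sum_antidiagonal_swap (f := fun ij => f ij.1)).trans (hfst f)
  have hpf : ∀ ij ∈ antidiagonal m, 1 / (((ij.1 : ℝ) + 1) * ((ij.2 : ℝ) + 1) ^ 2)
      = 1 / ((m : ℝ) + 2) * (1 / ((ij.2 : ℝ) + 1) ^ 2)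
        + 1 / ((m : ℝ) + 2) ^ 2 * (1 / ((ij.1 : ℝ) + 1))
        + 1 / ((m : ℝ) + 2) ^ 2 * (1 / ((ij.2 : ℝ) + 1)) := by
    intro ij hij
    have hm : (m : ℝ) + 2 = ((ij.1 : ℝ) + 1) + ((ij.2 : ℝ) + 1) := by
      rw [← mem_antidiagonal.mp hij]
      push_cast
      ring
    rw [hm]
    exact one_div_mul_sq_eq (by positivity) (by positivity) (by positivity)
  rw [Finset.sum_congr rfl hpf, Finset.sum_add_distrib, Finset.sum_add_distrib, ← Finset.mul_sum,
    ← Finset.mul_sum, ← Finset.mul_sum, hsnd fun k => 1 / ((k : ℝ) + 1) ^ 2,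
    hfst fun k => 1 / ((k : ℝ) + 1), hsnd fun k => 1 / ((k : ℝ) + 1), H, H]
  simp only [pow_one]
  ring

theorem sum_antidiagonal_pow_div_mul_pow_div_sq (x : ℝ) (m : ℕ) :
    ∑ ij ∈ antidiagonal m,
        x ^ (ij.1 + 1) / ((ij.1 : ℝ) + 1) * (x ^ (ij.2 + 1) / ((ij.2 : ℝ) + 1) ^ 2)
      = x ^ (m + 2) * (H 2 (m + 1) / ((m : ℝ) + 2) + 2 * H 1 (m + 1) / ((m : ℝ) + 2) ^ 2) := by
  rw [← sum_antidiagonal_one_div_mul_sq, Finset.mul_sum]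
  refine Finset.sum_congr rfl fun ij hij => ?_
  rw [div_mul_div_comm, ← pow_add, ← mem_antidiagonal.mp hij]
  ring

theorem summable_pow_div_mul_H_two {x : ℝ} (hx : |x| < 1) :
    Summable fun n : ℕ => x ^ (n + 1) / ((n : ℝ) + 1) * H 2 n := by
  refine summable_of_abs_le_abs_pow_succ hx fun n => ?_
  have hpos : (0 : ℝ) < (n : ℝ) + 1 := by positivity
  rw [abs_mul, abs_div, abs_pow, abs_of_pos hpos, abs_of_nonneg (H_nonneg 2 n),
    div_mul_eq_mul_div, div_le_iff₀ hpos]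
  exact mul_le_mul_of_nonneg_left ((H_le 2 n).trans (by linarith)) (by positivity)

theorem summable_H_one_div_sq_mul_pow {x : ℝ} (hx : |x| < 1) :
    Summable fun n : ℕ => H 1 (n + 1) / ((n : ℝ) + 1) ^ 2 * x ^ (n + 1) := by
  refine summable_of_abs_le_abs_pow_succ hx fun n => ?_
  have hpos : (0 : ℝ) < (n : ℝ) + 1 := by positivity
  rw [abs_mul, abs_div, abs_pow, abs_pow, abs_of_pos hpos, abs_of_nonneg (H_nonneg 1 (n + 1))]
  refine mul_le_of_le_one_left (by positivity) (div_le_one_of_le₀ ?_ (by positivity))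
  calc H 1 (n + 1) ≤ (n : ℝ) + 1 := by exact_mod_cast H_le 1 (n + 1)
    _ ≤ ((n : ℝ) + 1) ^ 2 := by nlinarith

theorem tsum_pow_div_mul_H_two {x : ℝ} (hx : |x| < 1) :
    ∑' n : ℕ, x ^ (n + 1) / ((n : ℝ) + 1) * H 2 n
      = Li 1 x * Li 2 x - 2 * ∑' n : ℕ, H 1 (n + 1) / ((n : ℝ) + 1) ^ 2 * x ^ (n + 1)
        + 2 * Li 3 x := by
  have h1 := hasSum_Li hx 1
  have h2 := hasSum_Li hx 2
  obtain ⟨d, hd_def⟩ : ∃ d : ℕ → ℝ, ∀ n, d n = x ^ (n + 1) / ((n : ℝ) + 1) * H 2 n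
      + 2 * (H 1 (n + 1) / ((n : ℝ) + 1) ^ 2 * x ^ (n + 1) - x ^ (n + 1) / ((n : ℝ) + 1) ^ 3) :=
    ⟨_, fun _ => rfl⟩
  have hd : HasSum d (∑' n : ℕ, x ^ (n + 1) / ((n : ℝ) + 1) * H 2 n
      + 2 * (∑' n : ℕ, H 1 (n + 1) / ((n : ℝ) + 1) ^ 2 * x ^ (n + 1) - Li 3 x)) := by
    rw [show d = _ from funext hd_def]
    exact (summable_pow_div_mul_H_two hx).hasSum.add
      (((summable_H_one_div_sq_mul_pow hx).hasSum.sub (hasSum_Li hx 3)).mul_left 2)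
  have hcoeff (m : ℕ) : d (m + 1) = ∑ ij ∈ antidiagonal m,
      x ^ (ij.1 + 1) / ((ij.1 : ℝ) + 1) ^ 1 * (x ^ (ij.2 + 1) / ((ij.2 : ℝ) + 1) ^ 2) := by
    simp only [pow_one]
    rw [hd_def, sum_antidiagonal_pow_div_mul_pow_div_sq, H_succ 1 (m + 1)]
    push_cast
    field_simp
    ring
  have hprod : Li 1 x * Li 2 x = ∑' n, d n := by
    rw [← h1.tsum_eq, ← h2.tsum_eq,
      tsum_mul_tsum_eq_tsum_sum_antidiagonal_of_summable_norm h1.summable.norm h2.summable.norm,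
      hd.summable.tsum_eq_zero_add, hd_def 0]
    simp only [hcoeff, H, Finset.range_zero, Finset.sum_empty]
    ring
  linarith [hd.tsum_eq]

theorem stmt17 (x : ℝ) (hx : |x| < 1) :
    ∑' n : ℕ, (1 / ((n : ℝ) + 1) ^ 2 * ∑ k ∈ Finset.range (n + 1), x ^ (k + 1) / ((k : ℝ) + 1))
      = 2 * (∑' n : ℕ, H 1 (n + 1) / ((n : ℝ) + 1) ^ 2 * x ^ (n + 1))
        + Real.log (1 - x) * Li 2 x - 2 * Li 3 x - zt 2 * Real.log (1 - x) := by
  have h1 := hasSum_Li hx 1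
  simp only [pow_one] at h1
  have hH2 := summable_pow_div_mul_H_two hx
  calc ∑' n : ℕ, (1 / ((n : ℝ) + 1) ^ 2 * ∑ k ∈ Finset.range (n + 1), x ^ (k + 1) / ((k : ℝ) + 1))
      = ∑' k : ℕ, x ^ (k + 1) / ((k : ℝ) + 1) * ∑' n : ℕ, 1 / (((n + k : ℕ) : ℝ) + 1) ^ 2 :=
        tsum_mul_sum_range_eq_tsum_mul_tsum_add
          (summable_one_div_nat_add_one_pow one_lt_two) h1.summable
    _ = ∑' k : ℕ, (zt 2 * (x ^ (k + 1) / ((k : ℝ) + 1)) - x ^ (k + 1) / ((k : ℝ) + 1) * H 2 k) :=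
        tsum_congr fun k => by rw [← zt_sub_H one_lt_two]; ring
    _ = zt 2 * Li 1 x - ∑' k : ℕ, x ^ (k + 1) / ((k : ℝ) + 1) * H 2 k := by
        rw [(h1.summable.mul_left _).tsum_sub hH2, tsum_mul_left, h1.tsum_eq]
    _ = _ := by
        rw [tsum_pow_div_mul_H_two hx, Li_one]
        ring
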